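/- Let I be a finite set, p(t) : ℝ → ℝ^I a continuous catty-corner curve (strictly increasing in each coordinate with limits ±∞ at ±∞), and fix m ∈ ℕ^I. Then the set of t ∈ ℝ for which there exist n ∈ ℕ^I with 0 < n ≤ m (componentwise) and d ∈ ℤ such that p(t)·n = d is a discrete subset of ℝ (in particular, it intersects every bounded interval in a finite set). -/

import Mathlib

/-!
For a fixed `n ≠ 0` with nonnegative entries, `t ↦ p(t)·n` is strictly increasing, so on `[a, b]`
it passes through each of the finitely many integers in `[p(a)·n, p(b)·n]` at most once. Only
finitely many `n` satisfy `0 < n ≤ m`.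
-/

open Set

theorem StrictMono.finite_preimage_range_intCast_inter_Icc {α R : Type*} [LinearOrder α]
    [Ring R] [LinearOrder R] [IsStrictOrderedRing R] [FloorRing R] {f : α → R}
    (hf : StrictMono f) (a b : α) :
    ({t | ∃ d : ℤ, f t = d} ∩ Icc a b).Finite := by
  refine Finite.of_finite_image ?_ hf.injective.injOn
  refine ((finite_Icc ⌈f a⌉ ⌊f b⌋).image ((↑) : ℤ → R)).subset ?_
  rintro _ ⟨t, ⟨⟨d, hd⟩, hat, htb⟩, rfl⟩
  refine ⟨d, ⟨Int.ceil_le.mpr ?_, Int.le_floor.mpr ?_⟩, hd.symm⟩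
  · exact hd ▸ hf.monotone hat
  · exact hd ▸ hf.monotone htb

theorem strictMono_sum_mul_natCast {α I : Type*} [Preorder α] [Fintype I] {p : α → I → ℝ}
    (hp : ∀ i, StrictMono fun t => p t i) {n : I → ℕ} (hn : n ≠ 0) :
    StrictMono fun t => ∑ i, p t i * (n i : ℝ) := by
  obtain ⟨i₀, hi₀⟩ := Function.ne_iff.mp hn
  refine Fintype.sum_strictMono.comp fun s t hst => Pi.lt_def.mpr ⟨fun i => ?_, i₀, ?_⟩
  · exact mul_le_mul_of_nonneg_right (hp i hst).le (Nat.cast_nonneg _)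
  · exact mul_lt_mul_of_pos_right (hp i₀ hst) (Nat.cast_pos.mpr (Nat.pos_of_ne_zero hi₀))

theorem stmt4_general {I : Type*} [Fintype I] (p : ℝ → I → ℝ)
    (hmono : ∀ i, StrictMono fun t => p t i)
    (m : I → ℕ) :
    ∀ a b : ℝ,
      ({t : ℝ | ∃ (n : I → ℕ) (d : ℤ), n ≠ 0 ∧ n ≤ m ∧ ∑ i, p t i * (n i : ℝ) = (d : ℝ)}
        ∩ Set.Icc a b).Finite := by
  classical
  intro a b
  have hweights : {n : I → ℕ | n ≠ 0 ∧ n ≤ m}.Finite :=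
    (finite_Icc 0 m).subset fun _ hn => ⟨zero_le, hn.2⟩
  refine (hweights.biUnion fun n hn =>
    (strictMono_sum_mul_natCast hmono hn.1).finite_preimage_range_intCast_inter_Icc a b).subset ?_
  rintro t ⟨⟨n, d, hn0, hnm, hsum⟩, htab⟩
  exact mem_biUnion ⟨hn0, hnm⟩ ⟨⟨d, hsum⟩, htab⟩

/-- For a continuous catty-corner curve `p : ℝ → ℝ^I` and a fixed
`m ∈ ℕ^I`, the set of `t ∈ ℝ` such that `p(t)·n ∈ ℤ` for some `0 < n ≤ m` is
discrete; in particular its intersection with any bounded interval is finite. -/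
theorem stmt4 {I : Type*} [Fintype I] (p : ℝ → I → ℝ)
    (hcont : ∀ i, Continuous fun t => p t i)
    (hmono : ∀ i, StrictMono fun t => p t i)
    (htop : ∀ i, Filter.Tendsto (fun t => p t i) Filter.atTop Filter.atTop)
    (hbot : ∀ i, Filter.Tendsto (fun t => p t i) Filter.atBot Filter.atBot)
    (m : I → ℕ) :
    ∀ a b : ℝ,
      ({t : ℝ | ∃ (n : I → ℕ) (d : ℤ), n ≠ 0 ∧ n ≤ m ∧ ∑ i, p t i * (n i : ℝ) = (d : ℝ)}
        ∩ Set.Icc a b).Finite :=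
  stmt4_general p hmono m
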